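/- arXiv:2402.10782 — 2 statements merged into one kernel-verified Lean document; each statement's English description precedes it below -/
import Mathlib

section
/- A tournament T is k-dicolourable (has dichromatic number at most k) if and only if T has a feedback arc set F whose underlying undirected graph is k-colourable. -/
/-- A tournament: irreflexive, and exactly one arc between distinct vertices. -/
def IsTournament {V : Type*} (r : V → V → Prop) : Prop :=
  (∀ v, ¬ r v v) ∧ ∀ u v, u ≠ v → ((r u v ∨ r v u) ∧ ¬ (r u v ∧ r v u))

/-- The backedge graph of a tournament `r` with respect to an ordering `lt`:
an edge `{u,v}` whenever the arc between `u` and `v` is a back-arc. -/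
def backedgeGraph {V : Type*} (r lt : V → V → Prop) : SimpleGraph V where
  Adj u v := u ≠ v ∧ ((r u v ∧ lt v u) ∨ (r v u ∧ lt u v))
  symm := ⟨fun u v h => ⟨Ne.symm h.1, h.2.symm⟩⟩
  loopless := ⟨fun v h => h.1 rfl⟩

/-- A digraph is acyclic if it has no directed cycle. -/
def DAcyclic {V : Type*} (r : V → V → Prop) : Prop :=
  ∀ x, ¬ Relation.TransGen r x x

/-- `r` admits a dicolouring with `k` colours: each colour class induces an
acyclic subtournament. -/
def IsDicolourable {V : Type*} (r : V → V → Prop) (k : ℕ) : Prop :=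
  ∃ c : V → Fin k, DAcyclic (fun u v => r u v ∧ c u = c v)

/-- The underlying undirected graph of a set of arcs `F`. -/
def arcGraph {V : Type*} (F : V → V → Prop) : SimpleGraph V where
  Adj u v := u ≠ v ∧ (F u v ∨ F v u)
  symm := ⟨fun u v h => ⟨Ne.symm h.1, h.2.symm⟩⟩
  loopless := ⟨fun v h => h.1 rfl⟩

/-!
Given a dicolouring `c`, order the vertices first by colour and then, inside each colour class,
along the acyclic subtournament it induces, and extend this to a linear order. Every back arc of
that order joins two different colours, so the back arcs form a feedback arc set properly
coloured by `c`. Conversely, a proper colouring of a feedback arc set `F` is a dicolouring: an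
arc inside a colour class is not in `F`, so each colour class lies in the acyclic digraph `r \ F`.
-/

open Relation

section

variable {V : Type*} {r : V → V → Prop}

theorem DAcyclic.mono {s : V → V → Prop} (hrs : r ≤ s) (hs : DAcyclic s) : DAcyclic r :=
  fun x hx => hs x (TransGen.mono hrs x x hx)

theorem dAcyclic_of_isStrictOrder (lt : V → V → Prop) [IsStrictOrder V lt] : DAcyclic lt := by
  intro x hx
  rw [transGen_eq_self] at hx
  exact irrefl x hx

/-- Szpilrajn's theorem for acyclic digraphs. -/
theorem DAcyclic.exists_isStrictTotalOrder (h : DAcyclic r) :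
    ∃ lt : V → V → Prop, IsStrictTotalOrder V lt ∧ r ≤ lt := by
  have : IsPartialOrder V (ReflGen (TransGen r)) :=
    { antisymm := by
        rintro a b (_ | hab) (_ | hba)
        all_goals first | rfl | exact (h a (hab.trans hba)).elim }
  obtain ⟨le, hle, hle_ext⟩ := extend_partialOrder (ReflGen (TransGen r))
  refine ⟨fun a b => ¬ le b a, ?_, fun a b hab hba => ?_⟩
  · exact
      { trichotomous a b hab hba := hle.antisymm a b (not_not.1 hba) (not_not.1 hab)
        irrefl a h := h (hle.refl a)
        trans a b c hab hbc hca := (hle.total a b).elim (fun h => hbc (hle.trans c a b hca h)) hab }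
  · obtain rfl := hle.antisymm a b (hle_ext a b (.single (.single hab))) hba
    exact h a (.single hab)

def colourLex {ι : Type*} [Preorder ι] (r : V → V → Prop) (c : V → ι) : V → V → Prop :=
  fun u v => c u < c v ∨ (c u = c v ∧ TransGen (fun a b => r a b ∧ c a = c b) u v)

theorem isStrictOrder_colourLex {ι : Type*} [Preorder ι] {c : V → ι}
    (hc : DAcyclic fun u v => r u v ∧ c u = c v) : IsStrictOrder V (colourLex r c) where
  irrefl u := by
    rintro (h | ⟨_, h⟩)
    · exact lt_irrefl _ h
    · exact hc u h
  trans u v w := by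
    rintro (huv | ⟨huv, huv'⟩) (hvw | ⟨hvw, hvw'⟩)
    · exact .inl (huv.trans hvw)
    · exact .inl (hvw ▸ huv)
    · exact .inl (huv ▸ hvw)
    · exact .inr ⟨huv.trans hvw, huv'.trans hvw'⟩

def backArcs (r lt : V → V → Prop) : V → V → Prop :=
  fun u v => r u v ∧ lt v u

theorem arcGraph_backArcs (lt : V → V → Prop) : arcGraph (backArcs r lt) = backedgeGraph r lt :=
  rfl

theorem dAcyclic_forwardArcs (hirr : ∀ v, ¬ r v v) (lt : V → V → Prop)
    [IsStrictTotalOrder V lt] : DAcyclic fun u v => r u v ∧ ¬ backArcs r lt u v := by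
  refine DAcyclic.mono (s := lt) (fun u v ⟨huv, hback⟩ => ?_) (dAcyclic_of_isStrictOrder lt)
  rcases trichotomous_of lt u v with h | rfl | h
  · exact h
  · exact (hirr u huv).elim
  · exact (hback ⟨huv, h⟩).elim

theorem colorable_backedgeGraph {k : ℕ} (lt : V → V → Prop) [IsStrictOrder V lt]
    (c : V → Fin k) (hc : ∀ u v, r u v → c u = c v → lt u v) :
    (backedgeGraph r lt).Colorable k := by
  refine ⟨.mk c fun {u v} huv hcuv => ?_⟩
  rcases huv.2 with ⟨hr, hvu⟩ | ⟨hr, huv⟩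
  · exact asymm (hc u v hr hcuv) hvu
  · exact asymm (hc v u hr hcuv.symm) huv

theorem IsDicolourable.exists_feedbackArcSet_colorable {k : ℕ} (hirr : ∀ v, ¬ r v v)
    (h : IsDicolourable r k) :
    ∃ F : V → V → Prop, (∀ u v, F u v → r u v) ∧
      DAcyclic (fun u v => r u v ∧ ¬ F u v) ∧ (arcGraph F).Colorable k := by
  obtain ⟨c, hc⟩ := h
  have := isStrictOrder_colourLex hc
  obtain ⟨lt, hlt, hlex⟩ := (dAcyclic_of_isStrictOrder (colourLex r c)).exists_isStrictTotalOrder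
  refine ⟨backArcs r lt, fun _ _ h => h.1, dAcyclic_forwardArcs hirr lt, ?_⟩
  rw [arcGraph_backArcs]
  exact colorable_backedgeGraph lt c fun u v huv hcuv =>
    hlex u v (.inr ⟨hcuv, .single ⟨huv, hcuv⟩⟩)

theorem isDicolourable_of_colorable_arcGraph {k : ℕ} {F : V → V → Prop} (hirr : ∀ v, ¬ r v v)
    (hF : DAcyclic fun u v => r u v ∧ ¬ F u v) (hcol : (arcGraph F).Colorable k) :
    IsDicolourable r k := by
  obtain ⟨col⟩ := hcol
  refine ⟨col, hF.mono fun u v ⟨huv, hcuv⟩ => ⟨huv, fun hFuv => ?_⟩⟩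
  have hne : u ≠ v := fun h => hirr v (h ▸ huv)
  exact col.valid ⟨hne, .inl hFuv⟩ hcuv

end

theorem stmt_5_general {V : Type*} (r : V → V → Prop) (hT : IsTournament r) (k : ℕ) :
    IsDicolourable r k ↔
      ∃ F : V → V → Prop, (∀ u v, F u v → r u v) ∧
        DAcyclic (fun u v => r u v ∧ ¬ F u v) ∧ (arcGraph F).Colorable k :=
  ⟨fun h => h.exists_feedbackArcSet_colorable hT.1,
    fun ⟨_, _, hF, hcol⟩ => isDicolourable_of_colorable_arcGraph hT.1 hF hcol⟩

theorem stmt_5 {V : Type*} [Fintype V] (r : V → V → Prop) (hT : IsTournament r) (k : ℕ) :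
    IsDicolourable r k ↔
      ∃ F : V → V → Prop, (∀ u v, F u v → r u v) ∧
        DAcyclic (fun u v => r u v ∧ ¬ F u v) ∧ (arcGraph F).Colorable k :=
  stmt_5_general r hT k
end

section
/- Let T be a tournament, ≺ a linear order on V(T) such that T^≺ is a forest, and let M ⊆ V(T) be a set such that T^≺ restricted to M is a spanning tree of M. If a, b are vertices outside M with a → m → b in T for every m ∈ M, then a ≺ b. -/
namespace SimpleGraph

variable {V : Type*} {G : SimpleGraph V}

theorem IsAcyclic.subsingleton_neighborSet_inter (hG : G.IsAcyclic) {M : Set V}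
    (hM : (G.induce M).Connected) {c : V} (hc : c ∉ M) :
    (G.neighborSet c ∩ M).Subsingleton := by
  classical
  rintro m₁ ⟨hcm₁ : G.Adj c m₁, hm₁⟩ m₂ ⟨hcm₂ : G.Adj c m₂, hm₂⟩
  by_contra hne
  obtain ⟨w⟩ := hM ⟨m₁, hm₁⟩ ⟨m₂, hm₂⟩
  have hsupp : ∀ v ∈ (w.toPath.1.map (Embedding.induce M).toHom).support, v ∈ M := by
    intro v hv
    rw [Walk.support_map, List.mem_map] at hv
    obtain ⟨x, -, rfl⟩ := hv
    exact x.2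
  obtain ⟨p, hpM⟩ : ∃ p : G.Path m₁ m₂, ∀ v ∈ p.1.support, v ∈ M :=
    ⟨⟨_, w.toPath.2.map (Embedding.induce (G := G) M).injective⟩, hsupp⟩
  have hpath : (Walk.cons hcm₁.symm (Walk.cons hcm₂ Walk.nil)).IsPath := by
    simp [Walk.isPath_def, hne, hcm₁.ne', hcm₂.ne]
  refine hc (hpM c ?_)
  rw [(hG.subsingleton_path m₁ m₂).elim p ⟨_, hpath⟩]
  simp

end SimpleGraph

theorem backedgeGraph_adj_or_adj {V : Type*} {r lt : V → V → Prop} [IsStrictTotalOrder V lt]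
    {a b m : V} (hba : lt b a) (ham : r a m) (hmb : r m b) :
    (backedgeGraph r lt).Adj a m ∨ (backedgeGraph r lt).Adj b m := by
  by_cases hma : lt m a
  · exact .inl ⟨(ne_of_irrefl hma).symm, .inl ⟨ham, hma⟩⟩
  · have hbm : lt b m := by
      rcases trichotomous_of lt a m with ham' | rfl | hma'
      · exact trans_of lt hba ham'
      · exact hba
      · exact absurd hma' hma
    exact .inr ⟨ne_of_irrefl hbm, .inr ⟨hmb, hbm⟩⟩

theorem stmt_11_general {V : Type*} (r lt : V → V → Prop)
    (hlt : IsStrictTotalOrder V lt)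
    (hforest : (backedgeGraph r lt).IsAcyclic)
    (M : Set V) (hM : 3 ≤ M.ncard)
    (htree : ((backedgeGraph r lt).induce M).IsTree)
    (a b : V) (haM : a ∉ M) (hbM : b ∉ M) (hab : a ≠ b)
    (harc : ∀ m ∈ M, r a m ∧ r m b) :
    lt a b := by
  rcases trichotomous_of lt a b with h | rfl | hba
  · exact h
  · exact absurd rfl hab
  set G := backedgeGraph r lt
  have hA := hforest.subsingleton_neighborSet_inter htree.connected haM
  have hB := hforest.subsingleton_neighborSet_inter htree.connected hbM
  have hcover : M ⊆ (G.neighborSet a ∩ M) ∪ (G.neighborSet b ∩ M) := fun m hm =>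
    (backedgeGraph_adj_or_adj hba (harc m hm).1 (harc m hm).2).imp (⟨·, hm⟩) (⟨·, hm⟩)
  have hA_card : (G.neighborSet a ∩ M).ncard ≤ 1 := (Set.ncard_le_one hA.finite).2 hA
  have hB_card : (G.neighborSet b ∩ M).ncard ≤ 1 := (Set.ncard_le_one hB.finite).2 hB
  have := (Set.ncard_le_ncard hcover (hA.finite.union hB.finite)).trans (Set.ncard_union_le _ _)
  omega

theorem stmt_11 {V : Type*} (r lt : V → V → Prop)
    (hT : IsTournament r) (hlt : IsStrictTotalOrder V lt)
    (hforest : (backedgeGraph r lt).IsAcyclic)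
    (M : Set V) (hM : 3 ≤ M.ncard)
    (htree : ((backedgeGraph r lt).induce M).IsTree)
    (a b : V) (haM : a ∉ M) (hbM : b ∉ M) (hab : a ≠ b)
    (harc : ∀ m ∈ M, r a m ∧ r m b) :
    lt a b :=
  stmt_11_general r lt hlt hforest M hM htree a b haM hbM hab harc
end
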